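/- (Theorem 3, probabilistic form.) Consider the linear model Y = Xβ* + ε with Y ∈ ℝ^n, X ∈ ℝ^{n×p}, |supp(β*)| ≤ S, and ε independent mean-zero sub-Gaussian with variance proxy σ². Assume ‖X‖₁ ≤ C √n for some constant C > 0 and that X satisfies the restricted eigenvalue condition with constant γ > 0 over the cone C(β*). Let α > 2 and λ₀ = σ √(α log p / n). Then with probability at least 1 − 2 n p^{−α/2}, every vector β̂ that is feasible for the constrained ℓ∞ problem with parameter λ₀ and satisfies ‖β̂‖₁ ≤ ‖β*‖₁ obeys (1/√n) ‖X(β̂ − β*)‖₂ ≤ (4Cσ/√γ) √(α S log p / n). -/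

import Mathlib

open MeasureTheory ProbabilityTheory Finset

/-- The maximum absolute entry of a vector in `ℝ^n`. -/
noncomputable def linftyNorm {n : ℕ} (v : Fin n → ℝ) : ℝ := ⨆ i, |v i|

/-- The maximum absolute column sum of a matrix `X ∈ ℝ^{n×p}`. -/
noncomputable def colSumNorm {n p : ℕ} (X : Matrix (Fin n) (Fin p) ℝ) : ℝ :=
  ⨆ j, ∑ i, |X i j|

/-- Membership in the cone `C(β*)`: `‖ν_{S₀ᶜ}‖₁ ≤ ‖ν_{S₀}‖₁`, `S₀ = supp(β*)`. -/
def inCone {p : ℕ} (βstar ν : Fin p → ℝ) : Prop :=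
  ∑ j ∈ Finset.univ.filter (fun j => βstar j = 0), |ν j|
    ≤ ∑ j ∈ Finset.univ.filter (fun j => βstar j ≠ 0), |ν j|

/-- Feasibility for the constrained ℓ∞ problem: `(1/√n) ‖Y − Xβ‖_∞ ≤ λ₀`. -/
noncomputable def feasible {n p : ℕ} (Y : Fin n → ℝ) (X : Matrix (Fin n) (Fin p) ℝ)
    (lam₀ : ℝ) (β : Fin p → ℝ) : Prop :=
  (1 / Real.sqrt n) * linftyNorm (fun i => Y i - X.mulVec β i) ≤ lam₀

/-!
On the event that `β*` is itself feasible, i.e. `|εᵢ| ≤ √n λ₀ = σ √(α log p)` for every `i`, the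
argument is deterministic. The vector `ν = β̂ − β*` lies in the cone because `‖β̂‖₁ ≤ ‖β*‖₁`, and
`‖Xν‖_∞ ≤ 2√n λ₀` because both `β̂` and `β*` are feasible. Then, by the column-sum bound,
Cauchy–Schwarz on the support of `β*` and the restricted eigenvalue condition,
`‖Xν‖₂² = ⟨ν, XᵀXν⟩ ≤ ‖ν‖₁ · C√n · 2√n λ₀ ≤ 2√S ‖ν‖₂ · 2Cn λ₀ ≤ 2√S ‖Xν‖₂ / √(nγ) · 2Cn λ₀`,
and dividing by `‖Xν‖₂` gives the bound. A union bound over the `n` sub-Gaussian tails shows that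
the event fails with probability at most `2n exp(−(σ √(α log p))² / 2σ²) = 2n p^{−α/2}`.
-/

open scoped Matrix

section Matrix

variable {m k : Type*} [Fintype m]

lemma abs_vecMul_apply_le (X : Matrix m k ℝ) {w : m → ℝ} {B M : ℝ} {j : k}
    (hB : ∑ i, |X i j| ≤ B) (hw : ∀ i, |w i| ≤ M) (hM : 0 ≤ M) :
    |(w ᵥ* X) j| ≤ M * B :=
  calc |(w ᵥ* X) j| = |∑ i, w i * X i j| := by simp only [Matrix.vecMul, dotProduct]
    _ ≤ ∑ i, |w i| * |X i j| := by
        simpa only [abs_mul] using abs_sum_le_sum_abs (fun i => w i * X i j) univ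
    _ ≤ ∑ i, M * |X i j| := by gcongr with i; exact hw i
    _ = M * ∑ i, |X i j| := (mul_sum _ _ _).symm
    _ ≤ M * B := by gcongr

lemma abs_dotProduct_le [Fintype k] (v w : k → ℝ) {K : ℝ} (hw : ∀ j, |w j| ≤ K) :
    |v ⬝ᵥ w| ≤ (∑ j, |v j|) * K :=
  calc |v ⬝ᵥ w| ≤ ∑ j, |v j| * |w j| := by
        simpa only [dotProduct, abs_mul] using abs_sum_le_sum_abs (fun j => v j * w j) univ
    _ ≤ ∑ j, |v j| * K := by gcongr with j; exact hw j
    _ = (∑ j, |v j|) * K := (sum_mul _ _ _).symm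

lemma sum_sq_mulVec_le [Fintype k] (X : Matrix m k ℝ) (ν : k → ℝ) {B M : ℝ}
    (hB : ∀ j, ∑ i, |X i j| ≤ B) (hM : ∀ i, |(X *ᵥ ν) i| ≤ M) (hM0 : 0 ≤ M) :
    ∑ i, (X *ᵥ ν) i ^ 2 ≤ (∑ j, |ν j|) * (M * B) :=
  calc ∑ i, (X *ᵥ ν) i ^ 2 = ν ⬝ᵥ ((X *ᵥ ν) ᵥ* X) := by
        rw [dotProduct_comm, ← Matrix.dotProduct_mulVec]
        simp only [dotProduct, sq]
    _ ≤ |ν ⬝ᵥ ((X *ᵥ ν) ᵥ* X)| := le_abs_self _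
    _ ≤ (∑ j, |ν j|) * (M * B) :=
        abs_dotProduct_le _ _ fun j => abs_vecMul_apply_le X (hB j) hM hM0

end Matrix

section Regression

variable {n p : ℕ} {X : Matrix (Fin n) (Fin p) ℝ} {βstar : Fin p → ℝ} {S : ℕ} {C γ : ℝ}

lemma feasible_iff_forall_abs_le (hn : 0 < n) {Y : Fin n → ℝ} {lam₀ : ℝ} {β : Fin p → ℝ} :
    feasible Y X lam₀ β ↔ ∀ i, |Y i - (X *ᵥ β) i| ≤ √n * lam₀ := by
  have : Nonempty (Fin n) := ⟨⟨0, hn⟩⟩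
  have hsn : 0 < √(n : ℝ) := Real.sqrt_pos.mpr (by exact_mod_cast hn)
  rw [feasible, one_div_mul_eq_div, div_le_iff₀' hsn, linftyNorm,
    ciSup_le_iff (Finite.bddAbove_range _)]

lemma le_colSumNorm (j : Fin p) : ∑ i, |X i j| ≤ colSumNorm X :=
  le_ciSup (f := fun j => ∑ i, |X i j|) (Finite.bddAbove_range _) j

lemma inCone_sub_of_sum_abs_le {βhat : Fin p → ℝ}
    (hl1 : ∑ j, |βhat j| ≤ ∑ j, |βstar j|) : inCone βstar (βhat - βstar) := by
  have hsplit (f : Fin p → ℝ) : ∑ j, f j = ∑ j ∈ univ.filter (fun j => βstar j = 0), f j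
      + ∑ j ∈ univ.filter (fun j => βstar j ≠ 0), f j :=
    (sum_filter_add_sum_filter_not univ _ f).symm
  have hoff : ∑ j ∈ univ.filter (fun j => βstar j = 0), |βhat j|
      = ∑ j ∈ univ.filter (fun j => βstar j = 0), |(βhat - βstar) j| :=
    sum_congr rfl fun j hj => by simp [(mem_filter.mp hj).2]
  have hzero : ∑ j ∈ univ.filter (fun j => βstar j = 0), |βstar j| = 0 :=
    sum_eq_zero fun j hj => by simp [(mem_filter.mp hj).2]
  have hon : ∑ j ∈ univ.filter (fun j => βstar j ≠ 0), (|βstar j| - |βhat j|)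
      ≤ ∑ j ∈ univ.filter (fun j => βstar j ≠ 0), |(βhat - βstar) j| :=
    sum_le_sum fun j _ => by
      rw [Pi.sub_apply, abs_sub_comm]
      exact abs_sub_abs_le_abs_sub _ _
  rw [hsplit, hsplit (fun j => |βstar j|), hoff, hzero] at hl1
  rw [sum_sub_distrib] at hon
  unfold inCone
  linarith

lemma sum_abs_le_of_inCone {ν : Fin p → ℝ} (hcone : inCone βstar ν)
    (hsparse : (univ.filter (fun j => βstar j ≠ 0)).card ≤ S) :
    ∑ j, |ν j| ≤ 2 * √S * √(∑ j, ν j ^ 2) := by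
  set A := univ.filter (fun j => βstar j ≠ 0)
  have hA : ∑ j ∈ A, |ν j| ≤ √S * √(∑ j, ν j ^ 2) :=
    calc ∑ j ∈ A, |ν j| = ∑ j ∈ A, |ν j| * 1 := by simp only [mul_one]
      _ ≤ √(∑ j ∈ A, |ν j| ^ 2) * √(∑ j ∈ A, (1 : ℝ) ^ 2) := Real.sum_mul_le_sqrt_mul_sqrt _ _ _
      _ ≤ √(∑ j, ν j ^ 2) * √S := by
        simp only [sq_abs, one_pow, sum_const, nsmul_eq_mul, mul_one]
        gcongr
        exact subset_univ A
      _ = √S * √(∑ j, ν j ^ 2) := mul_comm _ _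
  have hsplit := sum_filter_add_sum_filter_not univ (fun j => βstar j = 0) (fun j => |ν j|)
  unfold inCone at hcone
  change _ + ∑ j ∈ A, |ν j| = _ at hsplit
  linarith

lemma sqrt_sum_sq_mulVec_le_of_inCone (hn : 0 < n) (hγ : 0 < γ) (hC : 0 ≤ C)
    (hsparse : (univ.filter (fun j => βstar j ≠ 0)).card ≤ S)
    (hcolsum : colSumNorm X ≤ C * √n) {ν : Fin p → ℝ} (hcone : inCone βstar ν)
    (hRE : γ * ∑ j, ν j ^ 2 ≤ 1 / (n : ℝ) * ∑ i, (X *ᵥ ν) i ^ 2)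
    {M : ℝ} (hM : ∀ i, |(X *ᵥ ν) i| ≤ M) :
    √(∑ i, (X *ᵥ ν) i ^ 2) ≤ 2 * C * √S * M / √γ := by
  have hn' : (0 : ℝ) < n := by exact_mod_cast hn
  have hM0 : 0 ≤ M := (abs_nonneg _).trans (hM ⟨0, hn⟩)
  set Q := √(∑ i, (X *ᵥ ν) i ^ 2)
  have hQ : 0 ≤ Q := Real.sqrt_nonneg _
  have hQsq : ∑ i, (X *ᵥ ν) i ^ 2 = Q ^ 2 := (Real.sq_sqrt (by positivity)).symm
  have hν : √(∑ j, ν j ^ 2) ≤ Q / (√n * √γ) := by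
    have : ∑ j, ν j ^ 2 ≤ Q ^ 2 / (n * γ) := by
      rw [le_div_iff₀ (by positivity)]
      rw [hQsq] at hRE
      calc (∑ j, ν j ^ 2) * (n * γ) = n * (γ * ∑ j, ν j ^ 2) := by ring
        _ ≤ n * (1 / n * Q ^ 2) := by gcongr
        _ = Q ^ 2 := by field_simp
    calc √(∑ j, ν j ^ 2) ≤ √(Q ^ 2 / (n * γ)) := Real.sqrt_le_sqrt this
      _ = Q / (√n * √γ) := by rw [Real.sqrt_div' _ (by positivity), Real.sqrt_sq hQ,
        Real.sqrt_mul hn'.le]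
  have hquad : Q ^ 2 ≤ 2 * C * √S * M / √γ * Q :=
    calc Q ^ 2 ≤ (∑ j, |ν j|) * (M * (C * √n)) :=
          hQsq ▸ sum_sq_mulVec_le X ν (fun j => (le_colSumNorm j).trans hcolsum) hM hM0
      _ ≤ (2 * √S * (Q / (√n * √γ))) * (M * (C * √n)) := by
          gcongr
          exact (sum_abs_le_of_inCone hcone hsparse).trans (by gcongr)
      _ = 2 * C * √S * M / √γ * Q := by
          field_simp
  have hK : 0 ≤ 2 * C * √S * M / √γ := by positivity
  nlinarith

theorem prediction_error_le_of_feasible (hn : 0 < n) (hγ : 0 < γ) (hC : 0 ≤ C)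
    (hsparse : (univ.filter (fun j => βstar j ≠ 0)).card ≤ S)
    (hcolsum : colSumNorm X ≤ C * √n)
    (hRE : ∀ ν : Fin p → ℝ, inCone βstar ν →
      γ * ∑ j, ν j ^ 2 ≤ 1 / (n : ℝ) * ∑ i, (X *ᵥ ν) i ^ 2)
    {Y : Fin n → ℝ} {lam₀ : ℝ} (hstar : feasible Y X lam₀ βstar) {βhat : Fin p → ℝ}
    (hhat : feasible Y X lam₀ βhat) (hl1 : ∑ j, |βhat j| ≤ ∑ j, |βstar j|) :
    1 / √n * √(∑ i, (X *ᵥ (βhat - βstar)) i ^ 2) ≤ 4 * C * √S / √γ * lam₀ := by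
  rw [feasible_iff_forall_abs_le hn] at hstar hhat
  have hM (i : Fin n) : |(X *ᵥ (βhat - βstar)) i| ≤ 2 * (√n * lam₀) :=
    calc |(X *ᵥ (βhat - βstar)) i| = |(Y i - (X *ᵥ βstar) i) - (Y i - (X *ᵥ βhat) i)| := by
          rw [Matrix.mulVec_sub, Pi.sub_apply]; ring_nf
      _ ≤ 2 * (√n * lam₀) := by
          linarith [abs_sub (Y i - (X *ᵥ βstar) i) (Y i - (X *ᵥ βhat) i), hstar i, hhat i]
  have hcone := inCone_sub_of_sum_abs_le hl1
  have hsn : 0 < √(n : ℝ) := Real.sqrt_pos.mpr (by exact_mod_cast hn)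
  calc 1 / √n * √(∑ i, (X *ᵥ (βhat - βstar)) i ^ 2)
      ≤ 1 / √n * (2 * C * √S * (2 * (√n * lam₀)) / √γ) := by
        gcongr
        exact sqrt_sum_sq_mulVec_le_of_inCone hn hγ hC hsparse hcolsum hcone (hRE _ hcone) hM
    _ = 4 * C * √S / √γ * lam₀ := by field_simp; ring

end Regression

lemma measure_exists_le_card_mul {Ω ι : Type*} [MeasurableSpace Ω] [Fintype ι] (μ : Measure Ω)
    {P : ι → Ω → Prop} {b : ENNReal} (hb : ∀ i, μ {ω | P i ω} ≤ b) :
    μ {ω | ∃ i, P i ω} ≤ Fintype.card ι * b :=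
  calc μ {ω | ∃ i, P i ω} = μ (⋃ i, {ω | P i ω}) := by rw [Set.ofPred_exists]
    _ ≤ ∑ i, μ {ω | P i ω} := measure_iUnion_fintype_le μ _
    _ ≤ ∑ _i : ι, b := sum_le_sum fun i _ => hb i
    _ = Fintype.card ι * b := by rw [sum_const, card_univ, nsmul_eq_mul]

lemma exp_neg_sq_div_eq_rpow {σ α x : ℝ} (hσ : σ ≠ 0) (hx : 0 < x) (hαx : 0 ≤ α * Real.log x) :
    Real.exp (-(σ * √(α * Real.log x)) ^ 2 / (2 * σ ^ 2)) = x ^ (-(α / 2)) := by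
  rw [Real.rpow_def_of_pos hx, mul_pow, Real.sq_sqrt hαx]
  congr 1
  field_simp

lemma measure_exists_lt_abs_le_rpow {Ω : Type*} [MeasurableSpace Ω] (μ : Measure Ω) {n : ℕ}
    {σ α x : ℝ} (hσ : 0 < σ) (hx : 0 < x) (hαx : 0 ≤ α * Real.log x) (ε : Fin n → Ω → ℝ)
    (hsub : ∀ i, ∀ t : ℝ, 0 ≤ t →
      μ {ω | t < |ε i ω|} ≤ ENNReal.ofReal (2 * Real.exp (-(t ^ 2) / (2 * σ ^ 2)))) :
    μ {ω | ∃ i, σ * √(α * Real.log x) < |ε i ω|} ≤ ENNReal.ofReal (2 * n * x ^ (-(α / 2))) := by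
  have hbound :=
    measure_exists_le_card_mul μ fun i => hsub i (σ * √(α * Real.log x)) (by positivity)
  rwa [exp_neg_sq_div_eq_rpow hσ.ne' hx hαx, Fintype.card_fin, ← ENNReal.ofReal_natCast,
    ← ENNReal.ofReal_mul n.cast_nonneg, mul_left_comm, ← mul_assoc] at hbound

lemma ofReal_one_sub_le_measure {Ω : Type*} [MeasurableSpace Ω] (μ : Measure Ω)
    [IsProbabilityMeasure μ] {s : Set Ω} {b : ℝ} (hb : 0 ≤ b) (hs : μ sᶜ ≤ ENNReal.ofReal b) :
    ENNReal.ofReal (1 - b) ≤ μ s := by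
  rw [ENNReal.ofReal_sub _ hb, ENNReal.ofReal_one]
  exact (tsub_le_tsub_left hs 1).trans
    (tsub_le_iff_right.mpr (measure_univ (μ := μ) ▸ measure_univ_le_add_compl s))

theorem prediction_error_prob_general
    {Ω : Type*} [MeasureSpace Ω] [IsProbabilityMeasure (ℙ : Measure Ω)]
    (n p : ℕ) (hn : 1 ≤ n) (hp : 2 ≤ p) (σ : ℝ) (hσ : 0 < σ)
    (X : Matrix (Fin n) (Fin p) ℝ) (βstar : Fin p → ℝ)
    (S : ℕ)
    (hsparse : (Finset.univ.filter (fun j => βstar j ≠ 0)).card ≤ S)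
    (C : ℝ) (hC : 0 < C)
    (hcolsum : colSumNorm X ≤ C * Real.sqrt n)
    (γ : ℝ) (hγ : 0 < γ)
    (hRE : ∀ ν : Fin p → ℝ, inCone βstar ν →
      γ * ∑ j, (ν j) ^ 2 ≤ (1 / (n : ℝ)) * ∑ i, (X.mulVec ν i) ^ 2)
    (ε : Fin n → Ω → ℝ)
    (hsub : ∀ i, ∀ t : ℝ, 0 ≤ t →
      ℙ {ω | t < |ε i ω|} ≤ ENNReal.ofReal (2 * Real.exp (-(t ^ 2) / (2 * σ ^ 2))))
    (Y : Ω → Fin n → ℝ)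
    (hY : ∀ ω, ∀ i, Y ω i = X.mulVec βstar i + ε i ω)
    (α : ℝ) (hα : 2 < α)
    (lam₀ : ℝ) (hlam₀ : lam₀ = σ * Real.sqrt (α * Real.log p / n)) :
    ENNReal.ofReal (1 - 2 * n * (p : ℝ) ^ (-(α / 2)))
      ≤ ℙ {ω | ∀ βhat : Fin p → ℝ,
            feasible (Y ω) X lam₀ βhat → (∑ j, |βhat j|) ≤ (∑ j, |βstar j|) →
            (1 / Real.sqrt n)
                * Real.sqrt (∑ i, (X.mulVec (fun j => βhat j - βstar j) i) ^ 2)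
              ≤ (4 * C * σ / Real.sqrt γ) * Real.sqrt (α * S * Real.log p / n)} := by
  have hn' : (0 : ℝ) < n := by exact_mod_cast hn
  have hp' : (0 : ℝ) < p := by positivity
  have hαlog : 0 ≤ α * Real.log p :=
    mul_nonneg (by linarith) (Real.log_nonneg (by exact_mod_cast (by omega : 1 ≤ p)))
  have hthreshold : √n * lam₀ = σ * √(α * Real.log p) := by
    rw [hlam₀, Real.sqrt_div' _ hn'.le]
    field_simp
  refine (ofReal_one_sub_le_measure ℙ (s := {ω | feasible (Y ω) X lam₀ βstar}) (by positivity)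
    ?_).trans (measure_mono fun ω hstar βhat hhat hl1 => ?_)
  · calc ℙ {ω | feasible (Y ω) X lam₀ βstar}ᶜ
        ≤ ℙ {ω | ∃ i, σ * √(α * Real.log p) < |ε i ω|} :=
          measure_mono fun ω hω => by simpa [feasible_iff_forall_abs_le hn, hY, hthreshold] using hω
      _ ≤ _ := measure_exists_lt_abs_le_rpow ℙ hσ hp' hαlog ε hsub
  · refine (prediction_error_le_of_feasible hn hγ hC.le hsparse hcolsum hRE hstar hhat
      hl1).trans_eq ?_
    rw [hlam₀, show α * S * Real.log p / n = α * Real.log p / n * S by ring,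
      Real.sqrt_mul (div_nonneg hαlog hn'.le)]
    ring

/-- Theorem 3, probabilistic form: with probability at least
`1 − 2 n p^{−α/2}`, every feasible `β̂` with `‖β̂‖₁ ≤ ‖β*‖₁` satisfies
`(1/√n)‖X(β̂ − β*)‖₂ ≤ (4Cσ/√γ) √(α S log p / n)`. -/
theorem prediction_error_prob
    {Ω : Type*} [MeasureSpace Ω] [IsProbabilityMeasure (ℙ : Measure Ω)]
    (n p : ℕ) (hn : 1 ≤ n) (hp : 2 ≤ p) (σ : ℝ) (hσ : 0 < σ)
    (X : Matrix (Fin n) (Fin p) ℝ) (βstar : Fin p → ℝ)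
    (S : ℕ) (hS : 0 < S)
    (hsparse : (Finset.univ.filter (fun j => βstar j ≠ 0)).card ≤ S)
    (C : ℝ) (hC : 0 < C)
    (hcolsum : colSumNorm X ≤ C * Real.sqrt n)
    (γ : ℝ) (hγ : 0 < γ)
    (hRE : ∀ ν : Fin p → ℝ, inCone βstar ν →
      γ * ∑ j, (ν j) ^ 2 ≤ (1 / (n : ℝ)) * ∑ i, (X.mulVec ν i) ^ 2)
    (ε : Fin n → Ω → ℝ)
    (hmeas : ∀ i, Measurable (ε i))
    (hmean : ∀ i, ∫ ω, ε i ω = 0)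
    (hindep : iIndepFun ε ℙ)
    (hsub : ∀ i, ∀ t : ℝ, 0 ≤ t →
      ℙ {ω | t < |ε i ω|} ≤ ENNReal.ofReal (2 * Real.exp (-(t ^ 2) / (2 * σ ^ 2))))
    (Y : Ω → Fin n → ℝ)
    (hY : ∀ ω, ∀ i, Y ω i = X.mulVec βstar i + ε i ω)
    (α : ℝ) (hα : 2 < α)
    (lam₀ : ℝ) (hlam₀ : lam₀ = σ * Real.sqrt (α * Real.log p / n)) :
    ENNReal.ofReal (1 - 2 * n * (p : ℝ) ^ (-(α / 2)))
      ≤ ℙ {ω | ∀ βhat : Fin p → ℝ,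
            feasible (Y ω) X lam₀ βhat → (∑ j, |βhat j|) ≤ (∑ j, |βstar j|) →
            (1 / Real.sqrt n)
                * Real.sqrt (∑ i, (X.mulVec (fun j => βhat j - βstar j) i) ^ 2)
              ≤ (4 * C * σ / Real.sqrt γ) * Real.sqrt (α * S * Real.log p / n)} :=
  prediction_error_prob_general n p hn hp σ hσ X βstar S hsparse C hC hcolsum γ hγ hRE ε hsub Y hY α
    hα lam₀ hlam₀
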